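/- arXiv:1105.6190 — 2 statements merged into one kernel-verified Lean document; each statement's English description precedes it below -/
import Mathlib

section
/- Let X be a finite alphabet. Then the embedding order ≤_em is a partial order on X*, every set of pairwise ≤_em-incomparable words in X* is finite, and consequently, for every subset U ⊆ X*, the set M(U) of all minimal words of U with respect to ≤_em is finite. -/
/-- The set `M(U)` of minimal words of `U ⊆ X*` with respect to the embedding
(sublist) order. -/
def minimalWords {X : Type*} (U : Set (List X)) : Set (List X) :=
  {u ∈ U | ∀ v ∈ U, List.Sublist v u → v = u}

/-!
Higman's lemma, applied to the equality relation on the finite alphabet (a well-quasi-order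
since `X` is finite), says that the sublist relation is a well-quasi-order on `X*`, so its
antichains are finite. The minimal words of any `U` form such an antichain.
-/

theorem List.sublistForall₂_eq_eq_sublist (X : Type*) :
    List.SublistForall₂ (α := X) (· = ·) = List.Sublist := by
  ext l₁ l₂
  simp [List.sublistForall₂_iff, List.forall₂_eq_eq_eq]

theorem List.isPartialOrder_sublist (X : Type*) :
    IsPartialOrder (List X) (fun u v => List.Sublist u v) where
  refl := List.Sublist.refl
  trans _ _ _ := List.Sublist.trans
  antisymm _ _ := List.Sublist.antisymm

theorem List.wellQuasiOrdered_sublist (X : Type*) [Finite X] :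
    WellQuasiOrdered (fun u v : List X => List.Sublist u v) := by
  have higman := (Set.finite_univ (α := X)).partiallyWellOrderedOn
    |>.partiallyWellOrderedOn_sublistForall₂ (· = ·)
  simp only [Set.mem_univ, implies_true, Set.ofPred_true,
    Set.partiallyWellOrderedOn_univ_iff, List.sublistForall₂_eq_eq_sublist] at higman
  exact higman

theorem isAntichain_minimalWords {X : Type*} (U : Set (List X)) :
    IsAntichain (fun u v => List.Sublist u v) (minimalWords U) :=
  fun _ hu _ hv huv h => huv (hv.2 _ hu.1 h)

/-- For a finite alphabet `X`, the embedding order `≤_em` (the sublist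
relation) is a partial order on `X*`, every set of pairwise `≤_em`-incomparable words is
finite, and consequently, for every `U ⊆ X*`, the set `M(U)` of minimal words of `U` with
respect to `≤_em` is finite. -/
theorem stmt3 {X : Type*} [Finite X] :
    IsPartialOrder (List X) (fun u v => List.Sublist u v) ∧
    (∀ S : Set (List X),
      (∀ u ∈ S, ∀ v ∈ S, u ≠ v → ¬ List.Sublist u v ∧ ¬ List.Sublist v u) → S.Finite) ∧
    (∀ U : Set (List X), (minimalWords U).Finite) :=
  ⟨List.isPartialOrder_sublist X,
    fun _ hS => IsAntichain.finite_of_wellQuasiOrdered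
      (fun u hu v hv huv => (hS u hu v hv huv).1) (List.wellQuasiOrdered_sublist X),
    fun U => (isAntichain_minimalWords U).finite_of_wellQuasiOrdered
      (List.wellQuasiOrdered_sublist X)⟩
end

section
/- Let L be an integral ℓ-monoid, let α be a fuzzy regular expression over a finite alphabet X with associated alphabet Y, and let A = (A, X∪Y, δ^A, a₀, τ^A) be an arbitrary nondeterministic finite automaton recognizing the language ‖α_R‖. Then the least upper bounds defining the fuzzy automaton A_α = (A, X, δ^{A_α}, a₀, τ^{A_α}) associated with A and α exist, so A_α is well defined, and A_α recognizes the fuzzy language ‖α‖, i.e., L(A_α)(u) = ‖α‖(u) for every u ∈ X*. -/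
attribute [local instance] Classical.propDecidable

/-- A lattice-ordered monoid (ℓ-monoid): a lattice with least element `⊥` and greatest
element `⊤`, together with a monoid structure (multiplication `*`, unit `1`, playing the
role of `e`) such that `⊥` (playing the role of the scalar `0`) is absorbing and
multiplication distributes over binary joins on both sides. -/
class LMonoid (L : Type*) extends Lattice L, BoundedOrder L, Monoid L where
  mul_bot : ∀ x : L, x * ⊥ = ⊥
  bot_mul : ∀ x : L, ⊥ * x = ⊥
  mul_sup : ∀ x y z : L, x * (y ⊔ z) = x * y ⊔ x * z
  sup_mul : ∀ x y z : L, (x ⊔ y) * z = x * z ⊔ y * z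

/-- An integral ℓ-monoid: the unit of the multiplication is the top element of the lattice. -/
class IntegralLMonoid (L : Type*) extends LMonoid L where
  one_eq_top : (1 : L) = ⊤

/-- Fuzzy regular expressions over an alphabet `X` with scalars in `L`. -/
inductive FRE (X L : Type*) where
  | zero : FRE X L
  | eps : FRE X L
  | char : X → FRE X L
  | smul : L → FRE X L → FRE X L
  | plus : FRE X L → FRE X L → FRE X L
  | comp : FRE X L → FRE X L → FRE X L
  | star : FRE X L → FRE X L

/-- The set of scalars of `L` occurring in a fuzzy regular expression. -/
def FRE.scalars {X L : Type*} : FRE X L → Set L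
  | .zero => ∅
  | .eps => ∅
  | .char _ => ∅
  | .smul lam β => insert lam β.scalars
  | .plus β γ => β.scalars ∪ γ.scalars
  | .comp β γ => β.scalars ∪ γ.scalars
  | .star β => β.scalars

noncomputable section

namespace Fz

variable {L : Type*} [IntegralLMonoid L]

/-- Composition of fuzzy relations: `(R ∘ S)(a,b) = ⋁_{c} R(a,c) ⊗ S(c,b)`. -/
def fcomp {A : Type*} [Fintype A] (R S : A → A → L) : A → A → L :=
  fun a b => Finset.univ.sup fun c => R a c * S c b

/-- Composition of a fuzzy relation with a fuzzy set: `(R ∘ f)(a) = ⋁_{b} R(a,b) ⊗ f(b)`. -/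
def fcompf {A : Type*} [Fintype A] (R : A → A → L) (f : A → L) : A → L :=
  fun a => Finset.univ.sup fun b => R a b * f b

/-- Composition of a fuzzy set with a fuzzy relation: `(f ∘ R)(a) = ⋁_{b} f(b) ⊗ R(b,a)`. -/
def fcompfR {A : Type*} [Fintype A] (f : A → L) (R : A → A → L) : A → L :=
  fun a => Finset.univ.sup fun b => f b * R b a

/-- Powers of a fuzzy relation: `R⁰` is the crisp equality and `R^{k+1} = R^k ∘ R`. -/
def rpow {A : Type*} [Fintype A] (R : A → A → L) : ℕ → A → A → L
  | 0 => fun a b => if a = b then 1 else ⊥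
  | k + 1 => fcomp (rpow R k) R

private def dstarAux {A Z : Type*} [Fintype A] (δ : A → Z → A → L) : A → List Z → A → L
  | a, [], b => if a = b then 1 else ⊥
  | a, z :: w, b => Finset.univ.sup fun c => dstarAux δ a w c * δ c z b

/-- The extension of a fuzzy transition relation to words:
`δ(a, ε, b) = 1` if `a = b` and `⊥` otherwise, and
`δ(a, ux, b) = ⋁_{c} δ(a, u, c) ⊗ δ(c, x, b)`. -/
def dstar {A Z : Type*} [Fintype A] (δ : A → Z → A → L) (a : A) (w : List Z) (b : A) : L :=
  dstarAux δ a w.reverse b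

/-- Fuzzy language recognized by a fuzzy automaton with a single crisp initial state `a0`:
`L(A)(u) = ⋁_{b} δ(a0, u, b) ⊗ τ(b)`. -/
def lang {A Z : Type*} [Fintype A] (δ : A → Z → A → L) (a0 : A) (τ : A → L)
    (w : List Z) : L :=
  Finset.univ.sup fun b => dstar δ a0 w b * τ b

/-- Concatenation of fuzzy languages: `(fg)(u) = ⋁_{u = vw} f(v) ⊗ g(w)`
(a finite join over the factorizations of `u`). -/
def fconcat {X : Type*} (f g : List X → L) : List X → L :=
  fun u => (Finset.range (u.length + 1)).sup fun i => f (u.take i) * g (u.drop i)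

/-- Powers of a fuzzy language: `f⁰` is the characteristic function of the empty word,
and `f^{n+1} = fⁿ f`. -/
def fpow {X : Type*} (f : List X → L) : ℕ → List X → L
  | 0 => fun u => if u = [] then 1 else ⊥
  | n + 1 => fconcat (fpow f n) f

/-- `IsNorm α f` asserts that `f` is the fuzzy language `‖α‖` represented by the fuzzy
regular expression `α` (for the star, `‖β*‖(u)` is the least upper bound of the powers,
which is required to exist). -/
inductive IsNorm {X : Type*} : FRE X L → (List X → L) → Prop
  | zero : IsNorm .zero fun _ => ⊥
  | eps : IsNorm .eps fun u => if u = [] then 1 else ⊥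
  | char (x : X) : IsNorm (.char x) fun u => if u = [x] then 1 else ⊥
  | smul (lam : L) {β : FRE X L} {f : List X → L} :
      IsNorm β f → IsNorm (.smul lam β) fun u => lam * f u
  | plus {β γ : FRE X L} {f g : List X → L} :
      IsNorm β f → IsNorm γ g → IsNorm (.plus β γ) fun u => f u ⊔ g u
  | comp {β γ : FRE X L} {f g : List X → L} :
      IsNorm β f → IsNorm γ g → IsNorm (.comp β γ) (fconcat f g)
  | star {β : FRE X L} {f g : List X → L} :
      IsNorm β f → (∀ u, IsLUB {l | ∃ n : ℕ, l = fpow f n u} (g u)) →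
      IsNorm (.star β) g

/-- The ordinary regular expression `α_R` over `X ∪ Y` obtained from a fuzzy regular
expression `α` by replacing each scalar `λ` by the associated letter `λ' = sc λ ∈ Y`. -/
def toReg {X Y : Type*} (sc : L → Y) : FRE X L → RegularExpression (X ⊕ Y)
  | .zero => 0
  | .eps => 1
  | .char x => RegularExpression.char (Sum.inl x)
  | .smul lam β => RegularExpression.char (Sum.inr (sc lam)) * toReg sc β
  | .plus β γ => toReg sc β + toReg sc γ
  | .comp β γ => toReg sc β * toReg sc γ
  | .star β => (toReg sc β).star

/-- `U_Y(u)`: the set of words over `X ∪ Y` from which deleting all letters of `Y`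
yields `u` (the shuffle of `u` with `Y*`). -/
def UY {X : Type*} (Y : Type*) (u : List X) : Set (List (X ⊕ Y)) :=
  {v | v.filterMap (fun z => z.getLeft?) = u}

/-- The homomorphism `φ*_α : (X ∪ Y)* → (L, ⊗, 1)` determined by mapping every letter of
`X` to `1` and every letter `λ' ∈ Y` to the corresponding scalar `λ = φY λ'`. -/
def phiStar {X Y : Type*} (φY : Y → L) (v : List (X ⊕ Y)) : L :=
  (v.map (Sum.elim (fun _ => (1 : L)) φY)).prod

/-- The language `‖α_R‖` of the regular expression `α_R`, viewed as a fuzzy language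
with membership values in `{0, 1} ⊆ L`. -/
def langR {X Y : Type*} (sc : L → Y) (α : FRE X L) (v : List (X ⊕ Y)) : L :=
  if v ∈ (toReg sc α).matches' then 1 else ⊥

/-- The reflexive fuzzy relation `R` on the state set of a nondeterministic automaton over
`X ∪ Y`: `R(a,a) = 1` and, for `a ≠ b`, `R(a,b) = ⋁_{λ' ∈ Y} λ ⊗ δ(a, λ', b)`. -/
def Rstep {X Y A : Type*} [Fintype A] [Fintype Y] (φY : Y → L)
    (δ : A → X ⊕ Y → A → L) : A → A → L :=
  fun a b => if a = b then 1 else Finset.univ.sup fun y : Y => φY y * δ a (Sum.inr y) b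

/-- The fuzzy relation `R_A = Rⁿ`, `n = |A|`: the least transitive fuzzy relation
containing `R`. -/
def RA {X Y A : Type*} [Fintype A] [Fintype Y] (φY : Y → L)
    (δ : A → X ⊕ Y → A → L) : A → A → L :=
  rpow (Rstep φY δ) (Fintype.card A)

/-- The set `{φ*_α(v) ⊗ δ^A(a,v,b) : v ∈ U_Y(x)}` whose least upper bound defines the
transition `δ^{A_α}(a, x, b)` of the fuzzy automaton associated with `A` and `α`. -/
def dset {X Y A : Type*} [Fintype A] (φY : Y → L) (δ : A → X ⊕ Y → A → L)
    (a : A) (x : X) (b : A) : Set L :=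
  {l | ∃ v ∈ UY Y [x], l = phiStar φY v * dstar δ a v b}

/-- The set `{⋁_{b} φ*_α(v) ⊗ δ^A(a,v,b) ⊗ τ(b) : v ∈ Y*}` whose least upper bound defines
the terminal degree `τ^{A_α}(a)` of the fuzzy automaton associated with `A` and `α`. -/
def tset {X Y A : Type*} [Fintype A] (φY : Y → L) (δ : A → X ⊕ Y → A → L)
    (τ : A → L) (a : A) : Set L :=
  {l | ∃ w : List Y, l = Finset.univ.sup fun b =>
    phiStar φY ((w.map Sum.inr : List (X ⊕ Y))) *
      dstar δ a (w.map Sum.inr) b * τ b}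

end Fz

end

/-!
Both `‖α‖(u)` and `L(A_α)(u)` are the supremum of `φ*(v) ⊗ ‖α_R‖(v)` over `v ∈ U_Y(u)`: for `‖α‖`
by induction on `α` (Theorem 1 of the paper), for `L(A_α)` by induction on `u`, since a path of
`A_α` reading `x` is a path of `A` reading a word of `Y* x Y*`, and the crisp values of `A`
commute with all scalars. Multiplication distributes over finite joins only, so both suprema are
shown to be attained by finite joins. For `α` this holds because factors of `‖β‖ⁿ` beyond the
length of `u` only contribute `‖β‖(ε) ≤ 1`; for `A` because deleting a loop from a path through
`Y`-letters keeps it a path and, `L` being integral, does not decrease its weight.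
-/

open scoped Pointwise

namespace LMonoid

variable {L : Type*} [LMonoid L]

instance : MulLeftMono L :=
  ⟨fun x y z (h : y ≤ z) => by
    rw [← sup_eq_right.2 h, mul_sup]
    exact le_sup_left⟩

instance : MulRightMono L :=
  ⟨fun x y z (h : y ≤ z) => by
    change y * x ≤ z * x
    rw [← sup_eq_right.2 h, sup_mul]
    exact le_sup_left⟩

theorem mul_finset_sup {ι : Type*} (s : Finset ι) (f : ι → L) (x : L) :
    x * s.sup f = s.sup fun i => x * f i :=
  Finset.apply_sup_eq_sup_comp (x * ·) (mul_sup x) (mul_bot x)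

theorem finset_sup_mul {ι : Type*} (s : Finset ι) (f : ι → L) (x : L) :
    s.sup f * x = s.sup fun i => f i * x :=
  Finset.apply_sup_eq_sup_comp (· * x) (fun y z => sup_mul y z x) (bot_mul x)

theorem commute_of_eq_one_or_eq_bot {x : L} (hx : x = 1 ∨ x = ⊥) (y : L) : Commute x y := by
  rcases hx with rfl | rfl
  · exact Commute.one_left y
  · exact (bot_mul y).trans (mul_bot y).symm

theorem ite_mul_ite_eq_ite_and (p q : Prop) [Decidable p] [Decidable q] :
    ((if p then 1 else ⊥) * if q then 1 else ⊥ : L) = if p ∧ q then 1 else ⊥ := by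
  by_cases hp : p <;> by_cases hq : q <;> simp [hp, hq, mul_bot]

theorem finset_sup_ite_mul {B : Type*} [Fintype B] (a : B) (g : B → L) :
    (Finset.univ.sup fun b => (if a = b then 1 else ⊥) * g b) = g a := by
  refine le_antisymm (Finset.sup_le fun b _ => ?_) ?_
  · split_ifs with h
    · rw [h, one_mul]
    · rw [bot_mul]; exact bot_le
  · simpa using Finset.le_sup (f := fun b => (if a = b then (1 : L) else ⊥) * g b)
      (Finset.mem_univ a)

theorem finset_sup_mul_ite {B : Type*} [Fintype B] (a : B) (g : B → L) :
    (Finset.univ.sup fun b => g b * if b = a then 1 else ⊥) = g a := by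
  refine le_antisymm (Finset.sup_le fun b _ => ?_) ?_
  · split_ifs with h
    · rw [h, mul_one]
    · rw [mul_bot]; exact bot_le
  · simpa using Finset.le_sup (f := fun b => g b * if b = a then (1 : L) else ⊥)
      (Finset.mem_univ a)

end LMonoid

namespace IntegralLMonoid

variable {L : Type*} [IntegralLMonoid L]

theorem le_one (x : L) : x ≤ 1 := one_eq_top (L := L) ▸ le_top

theorem finset_sup_ite {ι : Type*} (s : Finset ι) (p : ι → Prop) [DecidablePred p]
    [Decidable (∃ i ∈ s, p i)] :
    (s.sup fun i => if p i then 1 else ⊥ : L) = if ∃ i ∈ s, p i then 1 else ⊥ := by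
  split_ifs with h
  · obtain ⟨i, hi, hpi⟩ := h
    refine le_antisymm (Finset.sup_le fun _ _ => le_one _) ?_
    simpa [hpi] using Finset.le_sup (f := fun i => if p i then (1 : L) else ⊥) hi
  · push Not at h
    exact (Finset.sup_eq_bot_iff _ _).2 fun i hi => if_neg (h i hi)

theorem prod_le_prod_of_sublist {l₁ l₂ : List L} (h : l₁.Sublist l₂) : l₂.prod ≤ l₁.prod :=
  List.Sublist.prod_le_prod' (M := Lᵒᵈ) h fun x _ => le_one (L := L) x

end IntegralLMonoid

section IsFiniteLUB

variable {α : Type*}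

def IsFiniteLUB [SemilatticeSup α] [OrderBot α] (S : Set α) (a : α) : Prop :=
  a ∈ upperBounds S ∧ ∃ V : Finset α, ↑V ⊆ S ∧ a ≤ V.sup id

variable [SemilatticeSup α] [OrderBot α] {S T : Set α} {a b : α}

theorem IsFiniteLUB.isLUB (h : IsFiniteLUB S a) : IsLUB S a := by
  obtain ⟨hub, V, hVS, haV⟩ := h
  exact ⟨hub, fun b hb => haV.trans (Finset.sup_le fun x hx => hb (hVS hx))⟩

theorem IsFiniteLUB.of_isLUB (h : IsFiniteLUB S a) (hb : IsLUB S b) : IsFiniteLUB S b :=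
  h.isLUB.unique hb ▸ h

theorem Set.Finite.isFiniteLUB (hS : S.Finite) : IsFiniteLUB S (hS.toFinset.sup id) :=
  ⟨fun _ hx => Finset.le_sup (f := id) (hS.mem_toFinset.2 hx), hS.toFinset, by simp, le_rfl⟩

theorem isFiniteLUB_singleton (a : α) : IsFiniteLUB {a} a :=
  ⟨fun _ hx => hx.le, {a}, by simp, by simp⟩

theorem isFiniteLUB_empty : IsFiniteLUB (∅ : Set α) ⊥ :=
  ⟨by simp, ∅, by simp, le_rfl⟩

theorem IsFiniteLUB.union (hS : IsFiniteLUB S a) (hT : IsFiniteLUB T b) :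
    IsFiniteLUB (S ∪ T) (a ⊔ b) := by
  classical
  obtain ⟨hSub, V, hVS, haV⟩ := hS
  obtain ⟨hTub, W, hWT, hbW⟩ := hT
  refine ⟨?_, V ∪ W, by simpa using Set.union_subset_union hVS hWT, ?_⟩
  · rintro x (hx | hx)
    exacts [le_sup_of_le_left (hSub hx), le_sup_of_le_right (hTub hx)]
  · rw [Finset.sup_union]
    exact sup_le_sup haV hbW

theorem isFiniteLUB_biUnion {ι : Type*} (s : Finset ι) {S : ι → Set α} {a : ι → α}
    (h : ∀ i ∈ s, IsFiniteLUB (S i) (a i)) : IsFiniteLUB (⋃ i ∈ s, S i) (s.sup a) := by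
  classical
  induction s using Finset.induction_on with
  | empty => simpa using isFiniteLUB_empty
  | insert i s hi ih =>
    rw [Finset.sup_insert, Finset.set_biUnion_insert]
    exact (h i (Finset.mem_insert_self i s)).union
      (ih fun j hj => h j (Finset.mem_insert_of_mem hj))

theorem IsFiniteLUB.of_forall_exists_le (h : IsFiniteLUB S a) (hST : ∀ x ∈ S, ∃ y ∈ T, x ≤ y)
    (hT : ∀ y ∈ T, y ≤ a) : IsFiniteLUB T a := by
  classical
  obtain ⟨-, V, hVS, haV⟩ := h
  choose! g hgT hg using hST
  refine ⟨hT, V.image g, fun _ hx => by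
    obtain ⟨x, hxV, rfl⟩ := Finset.mem_image.1 hx
    exact hgT x (hVS hxV), haV.trans ?_⟩
  exact Finset.sup_le fun x hx =>
    (hg x (hVS hx)).trans (Finset.le_sup (f := id) (Finset.mem_image_of_mem g hx))

end IsFiniteLUB

theorem IsFiniteLUB.mul {L : Type*} [LMonoid L] {S T : Set L} {a b : L}
    (hS : IsFiniteLUB S a) (hT : IsFiniteLUB T b) : IsFiniteLUB (S * T) (a * b) := by
  classical
  obtain ⟨hSub, V, hVS, haV⟩ := hS
  obtain ⟨hTub, W, hWT, hbW⟩ := hT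
  refine ⟨?_, V * W, by simpa using Set.mul_subset_mul hVS hWT, ?_⟩
  · rintro _ ⟨x, hx, y, hy, rfl⟩
    exact mul_le_mul' (hSub hx) (hTub hy)
  · refine (mul_le_mul' haV hbW).trans ?_
    rw [LMonoid.finset_sup_mul]
    refine Finset.sup_le fun x hx => ?_
    rw [LMonoid.mul_finset_sup]
    exact Finset.sup_le fun y hy => Finset.le_sup (f := id) (Finset.mul_mem_mul hx hy)

namespace Fz

open LMonoid IntegralLMonoid Sum Computability

variable {L : Type*} [IntegralLMonoid L]

section dstar

variable {A Z : Type*} [Fintype A] (δ : A → Z → A → L)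

theorem dstar_nil (a b : A) : dstar δ a [] b = if a = b then 1 else ⊥ := rfl

theorem dstar_append_singleton (a b : A) (w : List Z) (z : Z) :
    dstar δ a (w ++ [z]) b = Finset.univ.sup fun c => dstar δ a w c * δ c z b := by
  simp only [dstar, List.reverse_append, List.reverse_cons, List.reverse_nil, List.nil_append,
    List.singleton_append]
  rfl

theorem dstar_append (a b : A) (u v : List Z) :
    dstar δ a (u ++ v) b = Finset.univ.sup fun c => dstar δ a u c * dstar δ c v b := by
  induction v using List.reverseRecOn generalizing b with
  | nil => rw [List.append_nil]; exact (finset_sup_mul_ite b (dstar δ a u)).symm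
  | append_singleton v z ih =>
    simp only [← List.append_assoc, dstar_append_singleton, ih, finset_sup_mul, mul_finset_sup,
      mul_assoc]
    exact Finset.sup_comm _ _ _

theorem dstar_cons (a b : A) (z : Z) (w : List Z) :
    dstar δ a (z :: w) b = Finset.univ.sup fun c => δ a z c * dstar δ c w b := by
  have hz : ∀ c, dstar δ a [z] c = δ a z c := fun c => by
    rw [← List.nil_append [z], dstar_append_singleton]
    exact finset_sup_ite_mul a fun c' => δ c' z c
  rw [← List.singleton_append, dstar_append]
  simp only [hz]

theorem dstar_map {W : Type*} (g : W → Z) (a b : A) (w : List W) :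
    dstar δ a (w.map g) b = dstar (fun a y b => δ a (g y) b) a w b := by
  induction w using List.reverseRecOn generalizing b with
  | nil => rfl
  | append_singleton w y ih => simp [dstar_append_singleton, ih]

theorem lang_nil (a : A) (τ : A → L) : lang δ a τ [] = τ a :=
  finset_sup_ite_mul a τ

theorem lang_append (a : A) (τ : A → L) (u v : List Z) :
    lang δ a τ (u ++ v) = Finset.univ.sup fun c => dstar δ a u c * lang δ c τ v := by
  simp only [lang, dstar_append, finset_sup_mul, mul_finset_sup, mul_assoc]
  exact Finset.sup_comm _ _ _

theorem lang_cons (a : A) (τ : A → L) (z : Z) (w : List Z) :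
    lang δ a τ (z :: w) = Finset.univ.sup fun c => δ a z c * lang δ c τ w := by
  simp only [lang, dstar_cons, finset_sup_mul, mul_finset_sup, mul_assoc]
  exact Finset.sup_comm _ _ _

end dstar

section crisp

variable {A Z : Type*} {δ : A → Z → A → L}

def toNFA (δ : A → Z → A → L) (a c : A) : NFA Z A where
  step a z := {b | δ a z b = 1}
  start := {a}
  accept := {c}

theorem mem_accepts_toNFA {a c : A} {w : List Z} :
    w ∈ (toNFA δ a c).accepts ↔ c ∈ (toNFA δ a c).evalFrom {a} w := by
  simp [NFA.mem_accepts, toNFA]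

variable [Fintype A] (hδ : ∀ a z b, δ a z b = 1 ∨ δ a z b = ⊥)
include hδ

theorem dstar_eq_ite (a c b : A) (w : List Z) :
    dstar δ a w b = if b ∈ (toNFA δ a c).evalFrom {a} w then 1 else ⊥ := by
  induction w using List.reverseRecOn generalizing b with
  | nil => simp [dstar_nil, eq_comm]
  | append_singleton w z ih =>
    have hstep : ∀ d, δ d z b = if δ d z b = 1 then 1 else ⊥ := fun d => by
      split_ifs with h
      exacts [h, (hδ d z b).resolve_left h]
    simp_rw [dstar_append_singleton, ih, NFA.evalFrom_append, NFA.evalFrom_singleton,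
      NFA.mem_stepSet]
    conv_lhs => enter [2, d]; rw [hstep d]
    simp_rw [ite_mul_ite_eq_ite_and, finset_sup_ite]
    simp only [Finset.mem_univ, true_and]
    congr

theorem dstar_eq_one_or_eq_bot (a b : A) (w : List Z) :
    dstar δ a w b = 1 ∨ dstar δ a w b = ⊥ := by
  rw [dstar_eq_ite hδ a b]
  split_ifs <;> simp

/-- Loop removal, by the pumping lemma. -/
theorem exists_sublist_dstar_le (a c : A) (w : List Z) :
    ∃ w', w'.Sublist w ∧ w'.length < Fintype.card (Set A) ∧ dstar δ a w c ≤ dstar δ a w' c := by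
  by_cases hlen : w.length < Fintype.card (Set A)
  · exact ⟨w, List.Sublist.refl w, hlen, le_rfl⟩
  rw [dstar_eq_ite hδ a c]
  split_ifs with hw
  · obtain ⟨x, y, z, hxyz, -, hy, hpump⟩ :=
      (toNFA δ a c).pumping_lemma (mem_accepts_toNFA.2 hw) (not_lt.1 hlen)
    have hxz : x ++ [] ++ z ∈ (toNFA δ a c).accepts :=
      hpump <| Language.append_mem_mul
        (Language.append_mem_mul (Set.mem_singleton x) (Language.nil_mem_kstar {y}))
        (Set.mem_singleton z)
    rw [List.append_nil] at hxz
    have hdec : (x ++ z).length < w.length := by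
      simp only [hxyz, List.length_append]
      have := List.length_pos_of_ne_nil hy
      omega
    obtain ⟨w', hsub, hlen', hle⟩ := exists_sublist_dstar_le a c (x ++ z)
    refine ⟨w', hsub.trans (hxyz ▸ (List.sublist_append_left x y).append_right z), hlen', ?_⟩
    rwa [dstar_eq_ite hδ a c, if_pos (mem_accepts_toNFA.1 hxz)] at hle
  · exact ⟨[], List.nil_sublist w, Fintype.card_pos, bot_le⟩
termination_by w.length
decreasing_by exact hdec

theorem exists_isFiniteLUB_weightedPaths [Finite Z] (ψ : Z → L) (a c : A) :
    ∃ s, IsFiniteLUB (Set.range fun w : List Z => (w.map ψ).prod * dstar δ a w c) s := by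
  let val := fun w : List Z => (w.map ψ).prod * dstar δ a w c
  have hF : (val '' {w | w.length < Fintype.card (Set A)}).Finite :=
    (List.finite_length_lt Z _).image val
  refine ⟨_, hF.isFiniteLUB.of_forall_exists_le ?_ ?_⟩
  · rintro _ ⟨w, -, rfl⟩
    exact ⟨val w, ⟨w, rfl⟩, le_rfl⟩
  · rintro _ ⟨w, rfl⟩
    obtain ⟨w', hsub, hlen, hle⟩ := exists_sublist_dstar_le hδ a c w
    exact (mul_le_mul' (prod_le_prod_of_sublist (hsub.map ψ)) hle).trans
      (hF.isFiniteLUB.1 ⟨w', hlen, rfl⟩)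

end crisp

section words

variable {X Y : Type*} {φY : Y → L}

theorem phiStar_nil : phiStar φY ([] : List (X ⊕ Y)) = 1 := rfl

theorem phiStar_append (v₁ v₂ : List (X ⊕ Y)) :
    phiStar φY (v₁ ++ v₂) = phiStar φY v₁ * phiStar φY v₂ := by
  simp [phiStar]

theorem phiStar_inr_cons (y : Y) (v : List (X ⊕ Y)) :
    phiStar φY (inr y :: v) = φY y * phiStar φY v := by
  simp [phiStar]

theorem phiStar_map_inr (w : List Y) : phiStar φY (w.map inr : List (X ⊕ Y)) = (w.map φY).prod := by
  simp [phiStar, Function.comp_def]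

theorem mem_UY {u : List X} {v : List (X ⊕ Y)} :
    v ∈ UY Y u ↔ v.filterMap getLeft? = u := Iff.rfl

theorem append_mem_UY {u₁ u₂ : List X} {v₁ v₂ : List (X ⊕ Y)} (h₁ : v₁ ∈ UY Y u₁)
    (h₂ : v₂ ∈ UY Y u₂) : v₁ ++ v₂ ∈ UY Y (u₁ ++ u₂) := by
  rw [mem_UY, List.filterMap_append, h₁, h₂]

theorem inl_cons_mem_UY (x : X) {u : List X} {v : List (X ⊕ Y)} (h : v ∈ UY Y u) :
    inl x :: v ∈ UY Y (x :: u) :=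
  congrArg (x :: ·) h

theorem map_inr_mem_UY_nil (w : List Y) : (w.map inr : List (X ⊕ Y)) ∈ UY Y ([] : List X) := by
  simp [mem_UY, List.filterMap_map, Function.comp_def]

theorem exists_eq_map_inr_append_of_mem_UY_cons {x : X} {u : List X} {v : List (X ⊕ Y)}
    (h : v ∈ UY Y (x :: u)) :
    ∃ (w : List Y) (v' : List (X ⊕ Y)), v = w.map inr ++ inl x :: v' ∧ v' ∈ UY Y u := by
  induction v with
  | nil => simp [mem_UY] at h
  | cons z v ih =>
    rcases z with x' | y
    · obtain ⟨rfl, hv⟩ : x' = x ∧ v ∈ UY Y u := by simpa [mem_UY] using h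
      exact ⟨[], v, rfl, hv⟩
    · obtain ⟨w, v', rfl, hv'⟩ := ih (by simpa [mem_UY, List.filterMap_cons] using h)
      exact ⟨y :: w, v', rfl, hv'⟩

theorem UY_nil : UY Y ([] : List X) = Set.range (List.map inr) := by
  refine Set.Subset.antisymm (fun v hv => ?_) (Set.range_subset_iff.2 map_inr_mem_UY_nil)
  induction v with
  | nil => exact ⟨[], rfl⟩
  | cons z v ih =>
    rcases z with x | y
    · simp [mem_UY] at hv
    · obtain ⟨w, rfl⟩ := ih (by simpa [mem_UY] using hv)
      exact ⟨y :: w, rfl⟩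

end words

section weights

variable {X Y : Type*} {φY : Y → L}

theorem mem_language_singleton {Z : Type*} {v v₀ : List Z} :
    v ∈ ({v₀} : Language Z) ↔ v = v₀ := Iff.rfl

def weightsOn (φY : Y → L) (M : Language (X ⊕ Y)) (u : List X) : Set L :=
  phiStar φY '' {v | v ∈ M ∧ v ∈ UY Y u}

theorem isFiniteLUB_weightsOn_zero (u : List X) : IsFiniteLUB (weightsOn φY 0 u) ⊥ := by
  simpa [weightsOn] using isFiniteLUB_empty

theorem isFiniteLUB_weightsOn_singleton (v₀ : List (X ⊕ Y)) (u : List X) :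
    IsFiniteLUB (weightsOn φY {v₀} u) (if v₀ ∈ UY Y u then phiStar φY v₀ else ⊥) := by
  unfold weightsOn
  split_ifs with h
  · rw [show {v | v ∈ ({v₀} : Language (X ⊕ Y)) ∧ v ∈ UY Y u} = {v₀} from
      Set.ext fun v => ⟨fun hv => hv.1, fun hv => ⟨hv, hv ▸ h⟩⟩, Set.image_singleton]
    exact isFiniteLUB_singleton _
  · rw [show {v | v ∈ ({v₀} : Language (X ⊕ Y)) ∧ v ∈ UY Y u} = ∅ from
      Set.ext fun v => ⟨fun hv => h (hv.1 ▸ hv.2), False.elim⟩, Set.image_empty]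
    exact isFiniteLUB_empty

theorem isFiniteLUB_weightsOn_one (u : List X) :
    IsFiniteLUB (weightsOn φY 1 u) (if u = [] then 1 else ⊥) := by
  rw [show (1 : Language (X ⊕ Y)) = {[]} from rfl]
  simpa [mem_UY, eq_comm, phiStar_nil] using isFiniteLUB_weightsOn_singleton (φY := φY) [] u

theorem isFiniteLUB_weightsOn_char (x : X) (u : List X) :
    IsFiniteLUB (weightsOn φY {[inl x]} u) (if u = [x] then 1 else ⊥) := by
  simpa [mem_UY, eq_comm, phiStar] using isFiniteLUB_weightsOn_singleton (φY := φY) [inl x] u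

theorem weightsOn_add (M N : Language (X ⊕ Y)) (u : List X) :
    weightsOn φY (M + N) u = weightsOn φY M u ∪ weightsOn φY N u := by
  simp only [weightsOn, Language.mem_add, or_and_right, Set.ofPred_or, Set.image_union]

theorem weightsOn_singleton_mul (y : Y) (M : Language (X ⊕ Y)) (u : List X) :
    weightsOn φY ({[inr y]} * M) u = {φY y} * weightsOn φY M u := by
  ext l
  simp only [weightsOn, Language.mem_mul, mem_language_singleton, Set.singleton_mul,
    Set.mem_image, Set.mem_ofPred_eq]
  constructor
  · rintro ⟨_, ⟨⟨_, rfl, v, hv, rfl⟩, hu⟩, rfl⟩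
    exact ⟨_, ⟨v, ⟨hv, hu⟩, rfl⟩,
      by rw [List.singleton_append, phiStar_inr_cons]⟩
  · rintro ⟨_, ⟨v, ⟨hv, hu⟩, rfl⟩, rfl⟩
    exact ⟨_, ⟨⟨_, rfl, v, hv, rfl⟩, hu⟩,
      by rw [List.singleton_append, phiStar_inr_cons]⟩

theorem weightsOn_mul (M N : Language (X ⊕ Y)) (u : List X) :
    weightsOn φY (M * N) u = ⋃ i ∈ Finset.range (u.length + 1),
      weightsOn φY M (u.take i) * weightsOn φY N (u.drop i) := by
  ext l
  simp only [weightsOn, Language.mem_mul, Set.mem_mul, Set.mem_image, Set.mem_ofPred_eq,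
    Set.mem_iUnion, Finset.mem_range, exists_prop]
  constructor
  · rintro ⟨_, ⟨⟨v₁, h₁, v₂, h₂, rfl⟩, hu⟩, rfl⟩
    rw [mem_UY, List.filterMap_append] at hu
    subst hu
    exact ⟨_, by simp, _, ⟨v₁, ⟨h₁, (List.take_left ..).symm⟩, rfl⟩,
      _, ⟨v₂, ⟨h₂, (List.drop_left ..).symm⟩, rfl⟩, (phiStar_append v₁ v₂).symm⟩
  · rintro ⟨i, -, _, ⟨v₁, ⟨h₁, hu₁⟩, rfl⟩, _, ⟨v₂, ⟨h₂, hu₂⟩, rfl⟩, rfl⟩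
    refine ⟨v₁ ++ v₂, ⟨⟨v₁, h₁, v₂, h₂, rfl⟩, ?_⟩, phiStar_append v₁ v₂⟩
    simpa using append_mem_UY hu₁ hu₂

theorem weightsOn_kstar (M : Language (X ⊕ Y)) (u : List X) :
    weightsOn φY M∗ u = ⋃ n : ℕ, weightsOn φY (M ^ n) u := by
  ext l
  simp only [weightsOn, Language.kstar_eq_iSup_pow, Language.mem_iSup, Set.mem_image,
    Set.mem_ofPred_eq, Set.mem_iUnion]
  exact ⟨fun ⟨v, ⟨⟨n, hn⟩, hu⟩, hl⟩ => ⟨n, v, ⟨hn, hu⟩, hl⟩,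
    fun ⟨n, v, ⟨hn, hu⟩, hl⟩ => ⟨v, ⟨⟨n, hn⟩, hu⟩, hl⟩⟩

theorem fpow_succ_ge (f : List X → L) (k : ℕ) {u : List X} {i : ℕ} (hi : i ≤ u.length) :
    fpow f k (u.take i) * f (u.drop i) ≤ fpow f (k + 1) u :=
  Finset.le_sup (f := fun j => fpow f k (u.take j) * f (u.drop j))
    (Finset.mem_range.2 (Nat.lt_succ_of_le hi))

theorem fpow_le_sup_range (f : List X → L) (n : ℕ) (u : List X) :
    fpow f n u ≤ (Finset.range (u.length + 1)).sup fun k => fpow f k u := by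
  induction n generalizing u with
  | zero => exact Finset.le_sup (f := fun k => fpow f k u) (by simp)
  | succ n ih =>
    rw [fpow, fconcat]
    refine Finset.sup_le fun i hi => ?_
    have hi : i ≤ u.length := Nat.lt_succ_iff.1 (Finset.mem_range.1 hi)
    refine (mul_le_mul_left (ih _) _).trans ?_
    rw [finset_sup_mul]
    refine Finset.sup_le fun k hk => ?_
    have hk : k ≤ i := by simpa [hi] using Finset.mem_range.1 hk
    rcases hi.lt_or_eq with hi | rfl
    · exact (fpow_succ_ge f k hi.le).trans
        (Finset.le_sup (f := fun k => fpow f k u) (Finset.mem_range.2 (by omega)))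
    · rw [List.take_length, List.drop_length]
      exact (mul_le_of_le_one_right' (le_one _)).trans
        (Finset.le_sup (f := fun k => fpow f k u) (Finset.mem_range.2 (by omega)))

theorem isFiniteLUB_weightsOn_mul {M N : Language (X ⊕ Y)} {f g : List X → L}
    (hf : ∀ u, IsFiniteLUB (weightsOn φY M u) (f u))
    (hg : ∀ u, IsFiniteLUB (weightsOn φY N u) (g u))
    (u : List X) : IsFiniteLUB (weightsOn φY (M * N) u) (fconcat f g u) := by
  rw [weightsOn_mul]
  exact isFiniteLUB_biUnion _ fun i _ => (hf _).mul (hg _)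

theorem isFiniteLUB_weightsOn_pow {M : Language (X ⊕ Y)} {f : List X → L}
    (hf : ∀ u, IsFiniteLUB (weightsOn φY M u) (f u)) (n : ℕ) (u : List X) :
    IsFiniteLUB (weightsOn φY (M ^ n) u) (fpow f n u) := by
  induction n generalizing u with
  | zero => exact isFiniteLUB_weightsOn_one u
  | succ n ih =>
    rw [pow_succ]
    exact isFiniteLUB_weightsOn_mul ih hf u

theorem isFiniteLUB_weightsOn_kstar {M : Language (X ⊕ Y)} {f g : List X → L}
    (hf : ∀ u, IsFiniteLUB (weightsOn φY M u) (f u))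
    (hg : ∀ u, IsLUB {l | ∃ n : ℕ, l = fpow f n u} (g u)) (u : List X) :
    IsFiniteLUB (weightsOn φY M∗ u) (g u) := by
  have hpow := isFiniteLUB_weightsOn_pow hf
  have hgu : g u = (Finset.range (u.length + 1)).sup fun k => fpow f k u :=
    (hg u).unique ⟨by rintro _ ⟨n, rfl⟩; exact fpow_le_sup_range f n u,
      fun _ hb => Finset.sup_le fun k _ => hb ⟨k, rfl⟩⟩
  rw [weightsOn_kstar]
  refine (hgu ▸ isFiniteLUB_biUnion _ fun k _ => hpow k u).of_forall_exists_le ?_ ?_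
  · intro l hl
    obtain ⟨k, -, hk⟩ := Set.mem_iUnion₂.1 hl
    exact ⟨l, Set.mem_iUnion.2 ⟨k, hk⟩, le_rfl⟩
  · intro l hl
    obtain ⟨n, hn⟩ := Set.mem_iUnion.1 hl
    exact ((hpow n u).1 hn).trans ((hg u).1 ⟨n, rfl⟩)

theorem isFiniteLUB_weightsOn_toReg {sc : L → Y} {β : FRE X L} {f : List X → L}
    (hf : IsNorm β f) (hφY : ∀ l ∈ β.scalars, φY (sc l) = l) (u : List X) :
    IsFiniteLUB (weightsOn φY (toReg sc β).matches' u) (f u) := by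
  induction hf generalizing u with
  | zero => exact isFiniteLUB_weightsOn_zero u
  | eps => exact isFiniteLUB_weightsOn_one u
  | char x => exact isFiniteLUB_weightsOn_char x u
  | smul lam _ ih =>
    have hlam : φY (sc lam) = lam := hφY lam (Set.mem_insert lam _)
    rw [toReg, RegularExpression.matches'_mul, RegularExpression.matches'_char,
      weightsOn_singleton_mul, hlam]
    exact (isFiniteLUB_singleton lam).mul (ih (fun l hl => hφY l (Set.mem_insert_of_mem lam hl)) u)
  | plus _ _ ihβ ihγ =>
    rw [toReg, RegularExpression.matches'_add, weightsOn_add]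
    exact (ihβ (fun l hl => hφY l (Or.inl hl)) u).union (ihγ (fun l hl => hφY l (Or.inr hl)) u)
  | comp _ _ ihβ ihγ =>
    rw [toReg, RegularExpression.matches'_mul]
    exact isFiniteLUB_weightsOn_mul (ihβ fun l hl => hφY l (Or.inl hl))
      (ihγ fun l hl => hφY l (Or.inr hl)) u
  | star _ hg ih =>
    rw [toReg, RegularExpression.matches'_star]
    exact isFiniteLUB_weightsOn_kstar (ih hφY) hg u

/-- Theorem 1 of the paper. -/
theorem isLUB_phiStar_mul_langR {sc : L → Y} {α : FRE X L} {f : List X → L} (hf : IsNorm α f)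
    (hφY : ∀ l ∈ α.scalars, φY (sc l) = l) (u : List X) :
    IsLUB ((fun v => phiStar φY v * langR sc α v) '' UY Y u) (f u) := by
  have h := isFiniteLUB_weightsOn_toReg hf hφY u
  refine (h.of_forall_exists_le ?_ ?_).isLUB
  · rintro _ ⟨v, ⟨hvα, hvu⟩, rfl⟩
    exact ⟨_, ⟨v, hvu, rfl⟩, by simp [langR, hvα]⟩
  · rintro _ ⟨v, hvu, rfl⟩
    by_cases hvα : v ∈ (toReg sc α).matches'
    · simpa [langR, hvα] using h.1 ⟨v, ⟨hvα, hvu⟩, rfl⟩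
    · simp [langR, hvα, mul_bot]

end weights

section associated

variable {X Y A : Type*} [Fintype A] {φY : Y → L} {δ : A → X ⊕ Y → A → L}
variable (hδ : ∀ a z b, δ a z b = 1 ∨ δ a z b = ⊥)
include hδ

theorem phiStar_append_mul_sup (a : A) (v₁ v₂ : List (X ⊕ Y)) (m : A → L) :
    phiStar φY (v₁ ++ v₂) * (Finset.univ.sup fun c => dstar δ a v₁ c * m c) =
      Finset.univ.sup fun c => (phiStar φY v₁ * dstar δ a v₁ c) * (phiStar φY v₂ * m c) := by
  rw [phiStar_append, mul_finset_sup]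
  congr 1
  funext c
  exact (commute_of_eq_one_or_eq_bot (dstar_eq_one_or_eq_bot hδ a c v₁) _).symm.mul_mul_mul_comm _ _

theorem phiStar_mul_dstar_inl (a b : A) (v₁ v₂ : List (X ⊕ Y)) (x : X) :
    phiStar φY (v₁ ++ inl x :: v₂) * dstar δ a (v₁ ++ inl x :: v₂) b =
      Finset.univ.sup fun d => Finset.univ.sup fun c =>
        (phiStar φY v₁ * dstar δ a v₁ c) * δ c (inl x) d * (phiStar φY v₂ * dstar δ d v₂ b) := by
  have hx : ∀ d, phiStar φY (v₁ ++ [inl x]) * dstar δ a (v₁ ++ [inl x]) d =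
      Finset.univ.sup fun c => (phiStar φY v₁ * dstar δ a v₁ c) * δ c (inl x) d := fun d => by
    rw [dstar_append_singleton, phiStar_append_mul_sup hδ]
    simp [phiStar]
  rw [← List.singleton_append, ← List.append_assoc, dstar_append, phiStar_append_mul_sup hδ]
  simp only [hx, finset_sup_mul]

omit hδ in
theorem tset_eq_image (τ : A → L) (a : A) :
    tset φY δ τ a = (fun v => phiStar φY v * lang δ a τ v) '' UY Y [] := by
  rw [UY_nil, ← Set.range_comp]
  ext l
  simp [tset, lang, mul_finset_sup, mul_assoc, eq_comm]

def silentWeights (φY : Y → L) (δ : A → X ⊕ Y → A → L) (a c : A) : Set L :=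
  Set.range fun w : List Y => phiStar φY (w.map inr : List (X ⊕ Y)) * dstar δ a (w.map inr) c

theorem exists_isFiniteLUB_silentWeights [Finite Y] (a c : A) :
    ∃ s, IsFiniteLUB (silentWeights φY δ a c) s := by
  simpa [silentWeights, phiStar_map_inr, dstar_map] using
    exists_isFiniteLUB_weightedPaths (fun a y b => hδ a (inr y) b) φY a c

theorem exists_isFiniteLUB_tset [Finite Y] (τ : A → L) (a : A) :
    ∃ s, IsFiniteLUB (tset φY δ τ a) s := by
  choose t ht using exists_isFiniteLUB_silentWeights (φY := φY) hδ
  have h := isFiniteLUB_biUnion Finset.univ fun b _ => (ht a b).mul (isFiniteLUB_singleton (τ b))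
  refine ⟨_, h.of_forall_exists_le ?_ ?_⟩
  · intro l hl
    obtain ⟨b, -, _, ⟨w, rfl⟩, _, rfl, rfl⟩ := Set.mem_iUnion₂.1 hl
    exact ⟨_, ⟨w, rfl⟩, Finset.le_sup_of_le (Finset.mem_univ b) le_rfl⟩
  · rintro _ ⟨w, rfl⟩
    exact Finset.sup_le fun b _ =>
      h.1 (Set.mem_iUnion₂.2 ⟨b, Finset.mem_univ b, Set.mul_mem_mul ⟨w, rfl⟩ rfl⟩)

theorem exists_isFiniteLUB_dset [Finite Y] (a : A) (x : X) (b : A) :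
    ∃ s, IsFiniteLUB (dset φY δ a x b) s := by
  choose t ht using exists_isFiniteLUB_silentWeights (φY := φY) hδ
  have h := isFiniteLUB_biUnion Finset.univ fun d _ =>
    (isFiniteLUB_biUnion Finset.univ fun c _ =>
      (ht a c).mul (isFiniteLUB_singleton (δ c (inl x) d))).mul (ht d b)
  refine ⟨_, h.of_forall_exists_le ?_ ?_⟩
  · intro l hl
    obtain ⟨d, -, _, hc, _, ⟨w₂, rfl⟩, rfl⟩ := Set.mem_iUnion₂.1 hl
    obtain ⟨c, -, _, ⟨w₁, rfl⟩, _, rfl, rfl⟩ := Set.mem_iUnion₂.1 hc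
    refine ⟨_, ⟨w₁.map inr ++ inl x :: w₂.map inr, ?_, rfl⟩, ?_⟩
    · exact append_mem_UY (u₁ := []) (map_inr_mem_UY_nil w₁)
        (inl_cons_mem_UY x (map_inr_mem_UY_nil w₂))
    · rw [phiStar_mul_dstar_inl hδ]
      exact Finset.le_sup_of_le (Finset.mem_univ d) (Finset.le_sup_of_le (Finset.mem_univ c) le_rfl)
  · rintro _ ⟨v, hv, rfl⟩
    obtain ⟨w₁, v₂, rfl, hv₂⟩ := exists_eq_map_inr_append_of_mem_UY_cons hv
    obtain ⟨w₂, rfl⟩ : v₂ ∈ Set.range (List.map inr) := UY_nil ▸ hv₂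
    rw [phiStar_mul_dstar_inl hδ]
    exact Finset.sup_le fun d _ => Finset.sup_le fun c _ => h.1 <| Set.mem_iUnion₂.2
      ⟨d, Finset.mem_univ d, Set.mul_mem_mul
        (Set.mem_iUnion₂.2 ⟨c, Finset.mem_univ c, Set.mul_mem_mul ⟨w₁, rfl⟩ rfl⟩) ⟨w₂, rfl⟩⟩

/-- The automaton counterpart of Theorem 1. -/
theorem isFiniteLUB_lang [Finite Y] {τ : A → L} {δα : A → X → A → L} {τα : A → L}
    (hδα : ∀ a x b, IsLUB (dset φY δ a x b) (δα a x b)) (hτα : ∀ a, IsLUB (tset φY δ τ a) (τα a))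
    (u : List X) (a : A) :
    IsFiniteLUB ((fun v => phiStar φY v * lang δ a τ v) '' UY Y u) (lang δα a τα u) := by
  induction u generalizing a with
  | nil =>
    obtain ⟨s, hs⟩ := exists_isFiniteLUB_tset hδ τ a
    rw [lang_nil, ← tset_eq_image]
    exact hs.of_isLUB (hτα a)
  | cons x u ih =>
    have hδα' : ∀ c, IsFiniteLUB (dset φY δ a x c) (δα a x c) := fun c =>
      (exists_isFiniteLUB_dset hδ a x c).choose_spec.of_isLUB (hδα a x c)
    have h := isFiniteLUB_biUnion Finset.univ fun c _ => (hδα' c).mul (ih c)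
    rw [lang_cons]
    refine h.of_forall_exists_le ?_ ?_
    · intro l hl
      obtain ⟨c, -, _, ⟨v₁, hv₁, rfl⟩, _, ⟨v₂, hv₂, rfl⟩, rfl⟩ := Set.mem_iUnion₂.1 hl
      refine ⟨_, ⟨v₁ ++ v₂, append_mem_UY hv₁ hv₂, rfl⟩, ?_⟩
      dsimp only
      rw [lang_append, phiStar_append_mul_sup hδ]
      exact Finset.le_sup_of_le (Finset.mem_univ c) le_rfl
    · rintro _ ⟨v, hv, rfl⟩
      obtain ⟨w, v₂, rfl, hv₂⟩ := exists_eq_map_inr_append_of_mem_UY_cons hv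
      have hv₁ : (w.map inr ++ [inl x] : List (X ⊕ Y)) ∈ UY Y [x] :=
        append_mem_UY (u₁ := []) (map_inr_mem_UY_nil w) (inl_cons_mem_UY x (v := []) rfl)
      dsimp only
      rw [← List.singleton_append, ← List.append_assoc, lang_append, phiStar_append_mul_sup hδ]
      exact Finset.sup_le fun c _ => h.1 <| Set.mem_iUnion₂.2
        ⟨c, Finset.mem_univ c, Set.mul_mem_mul ⟨_, hv₁, rfl⟩ ⟨v₂, hv₂, rfl⟩⟩

end associated

end Fz

open Fz in
theorem stmt6_general {L X Y A : Type*} [IntegralLMonoid L] [Fintype Y] [Fintype A]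
    (α : FRE X L) (sc : L → Y) (φY : Y → L)
    (hφY : ∀ l ∈ α.scalars, φY (sc l) = l)
    (δ : A → X ⊕ Y → A → L) (a0 : A) (τ : A → L)
    (hδ : ∀ a z b, δ a z b = 1 ∨ δ a z b = ⊥)
    (hrec : ∀ v : List (X ⊕ Y), lang δ a0 τ v = langR sc α v)
    (f : List X → L) (hf : IsNorm α f) :
    ((∀ (a : A) (x : X) (b : A), ∃ s : L, IsLUB (dset φY δ a x b) s) ∧
      (∀ a : A, ∃ s : L, IsLUB (tset φY δ τ a) s)) ∧
    (∀ (δα : A → X → A → L) (τα : A → L),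
      (∀ (a : A) (x : X) (b : A), IsLUB (dset φY δ a x b) (δα a x b)) →
      (∀ a : A, IsLUB (tset φY δ τ a) (τα a)) →
      ∀ u : List X, lang δα a0 τα u = f u) := by
  refine ⟨⟨fun a x b => (exists_isFiniteLUB_dset hδ a x b).imp fun _ h => h.isLUB,
    fun a => (exists_isFiniteLUB_tset hδ τ a).imp fun _ h => h.isLUB⟩, ?_⟩
  intro δα τα hδα hτα u
  have hA := (isFiniteLUB_lang hδ hδα hτα u a0).isLUB
  simp only [hrec] at hA
  exact hA.unique (isLUB_phiStar_mul_langR hf hφY u)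

open Fz in
/-- **Theorem 2 of the paper.** Let `L` be an integral ℓ-monoid, `α` a fuzzy
regular expression over a finite alphabet `X` with associated alphabet `Y`, and
`A = (A, X∪Y, δ, a₀, τ)` an arbitrary nondeterministic finite automaton recognizing the
language `‖α_R‖`.  Then the least upper bounds defining the fuzzy automaton `A_α`
(its fuzzy transition relation `δα` and its fuzzy set of terminal states `τα`) exist, so
`A_α` is well defined, and `A_α` recognizes the fuzzy language `‖α‖`:
`L(A_α)(u) = ‖α‖(u)` for every `u ∈ X*`. -/
theorem stmt6 {L X Y A : Type*} [IntegralLMonoid L] [Fintype X] [Fintype Y] [Fintype A]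
    (α : FRE X L) (sc : L → Y) (φY : Y → L)
    (hsc : Set.BijOn sc α.scalars (Set.univ : Set Y))
    (hφY : ∀ l ∈ α.scalars, φY (sc l) = l)
    (δ : A → X ⊕ Y → A → L) (a0 : A) (τ : A → L)
    (hδ : ∀ a z b, δ a z b = 1 ∨ δ a z b = ⊥)
    (hτ : ∀ a, τ a = 1 ∨ τ a = ⊥)
    (hrec : ∀ v : List (X ⊕ Y), lang δ a0 τ v = langR sc α v)
    (f : List X → L) (hf : IsNorm α f) :
    ((∀ (a : A) (x : X) (b : A), ∃ s : L, IsLUB (dset φY δ a x b) s) ∧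
      (∀ a : A, ∃ s : L, IsLUB (tset φY δ τ a) s)) ∧
    (∀ (δα : A → X → A → L) (τα : A → L),
      (∀ (a : A) (x : X) (b : A), IsLUB (dset φY δ a x b) (δα a x b)) →
      (∀ a : A, IsLUB (tset φY δ τ a) (τα a)) →
      ∀ u : List X, lang δα a0 τα u = f u) :=
  stmt6_general α sc φY hφY δ a0 τ hδ hrec f hf
end
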